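/- arXiv:math/9308203 — 2 statements merged into one kernel-verified Lean document; each statement's English description precedes it below -/
import Mathlib

section
/- Let W = {λ < κ : cof(λ) = ω}. If A ⊆ L \ {λ+1 : λ ∈ W} (where L = {λ+1 : λ a limit ordinal}) and B(A) = {α−1 : α ∈ A} is stationary, then A does not belong to the pleasant closure of the ideal generated by I_κ ∪ {W}. -/
open Set

namespace PaperIdeals

/-- Diagonal union of a family `X` indexed by a set `A` of ordinals. -/
def diagU (A : Set Ordinal.{0}) (X : Ordinal.{0} → Set Ordinal.{0}) : Set Ordinal.{0} :=
  {ξ | ∃ α < ξ, α ∈ A ∧ ξ ∈ X α}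

/-- `X` is bounded below `κ`. -/
def BddIn (κ : Cardinal.{0}) (X : Set Ordinal.{0}) : Prop := ∃ θ < κ.ord, X ⊆ Iio θ

/-- `J` is a `<κ`-complete ideal on `κ` containing all singletons,
closed under subsets and (finite and small) unions. -/
def IsIdeal (κ : Cardinal.{0}) (J : Set Ordinal.{0} → Prop) : Prop :=
  (∀ X, J X → X ⊆ Iio κ.ord) ∧
  (∀ X Y, J X → Y ⊆ X → J Y) ∧
  (∀ X Y, J X → J Y → J (X ∪ Y)) ∧
  (∀ ξ < κ.ord, J {ξ}) ∧
  (∀ θ : Ordinal.{0}, θ.card < κ → ∀ X : Ordinal.{0} → Set Ordinal.{0},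
    (∀ α, J (X α)) → J (⋃ α ∈ Iio θ, X α))

def Proper (κ : Cardinal.{0}) (J : Set Ordinal.{0} → Prop) : Prop := ¬ J (Iio κ.ord)

/-- The coideal `I⁺`. -/
def Pos (κ : Cardinal.{0}) (J : Set Ordinal.{0} → Prop) (X : Set Ordinal.{0}) : Prop :=
  X ⊆ Iio κ.ord ∧ ¬ J X

/-- The dual filter `I*`. -/
def Dual (κ : Cardinal.{0}) (J : Set Ordinal.{0} → Prop) (X : Set Ordinal.{0}) : Prop :=
  X ⊆ Iio κ.ord ∧ J (Iio κ.ord \ X)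

/-- The restriction `I ↾ A`. -/
def restrict (κ : Cardinal.{0}) (J : Set Ordinal.{0} → Prop) (A : Set Ordinal.{0})
    (X : Set Ordinal.{0}) : Prop :=
  X ⊆ Iio κ.ord ∧ J (X ∩ A)

/-- Pleasant: closed under diagonal unions indexed by sets in the ideal. -/
def Pleasant (J : Set Ordinal.{0} → Prop) : Prop :=
  ∀ A, J A → ∀ X : Ordinal.{0} → Set Ordinal.{0}, (∀ α, J (X α)) → J (diagU A X)

/-- Prepleasant: closed under diagonal unions of bounded sets indexed by sets in the ideal. -/
def Prepleasant (κ : Cardinal.{0}) (J : Set Ordinal.{0} → Prop) : Prop :=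
  ∀ Q, J Q → ∀ B : Ordinal.{0} → Set Ordinal.{0}, (∀ α, BddIn κ (B α)) → J (diagU Q B)

/-- Normal: closed under full `κ`-indexed diagonal unions. -/
def Normal (κ : Cardinal.{0}) (J : Set Ordinal.{0} → Prop) : Prop :=
  ∀ X : Ordinal.{0} → Set Ordinal.{0}, (∀ α, J (X α)) → J (diagU (Iio κ.ord) X)

/-- Quasinormal ideal. -/
def Quasinormal (κ : Cardinal.{0}) (J : Set Ordinal.{0} → Prop) : Prop :=
  ∀ X : Ordinal.{0} → Set Ordinal.{0}, (∀ α, J (X α)) →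
    ∃ Q, Dual κ J Q ∧ J (diagU Q X)

/-- Club subset of `κ`: unbounded in `κ.ord` and closed under limits. -/
def IsClubIn (κ : Cardinal.{0}) (C : Set Ordinal.{0}) : Prop :=
  C ⊆ Iio κ.ord ∧ (∀ α < κ.ord, ∃ β ∈ C, α < β) ∧
  (∀ δ < κ.ord, Order.IsSuccLimit δ → (∀ α < δ, ∃ β ∈ C, α < β ∧ β < δ) → δ ∈ C)

/-- Stationary subset of `κ`. -/
def StatIn (κ : Cardinal.{0}) (S : Set Ordinal.{0}) : Prop :=
  S ⊆ Iio κ.ord ∧ ∀ C, IsClubIn κ C → (S ∩ C).Nonempty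

/-- The nonstationary ideal `NS κ`. -/
def NS (κ : Cardinal.{0}) (X : Set Ordinal.{0}) : Prop :=
  X ⊆ Iio κ.ord ∧ ∃ C, IsClubIn κ C ∧ X ∩ C = ∅

/-- Membership in the ideal generated by a family `S`. -/
def genIdeal (κ : Cardinal.{0}) (S : Set Ordinal.{0} → Prop) (X : Set Ordinal.{0}) : Prop :=
  ∀ K, IsIdeal κ K → (∀ Y, S Y → K Y) → K X

/-- Membership in the pleasant closure of `S` (smallest pleasant ideal containing `S`). -/
def PClosure (κ : Cardinal.{0}) (S : Set Ordinal.{0} → Prop) (X : Set Ordinal.{0}) : Prop :=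
  ∀ K, IsIdeal κ K → Pleasant K → (∀ Y, S Y → K Y) → K X

/-- Membership in the prepleasant closure of `S`. -/
def PPClosure (κ : Cardinal.{0}) (S : Set Ordinal.{0} → Prop) (X : Set Ordinal.{0}) : Prop :=
  ∀ K, IsIdeal κ K → Prepleasant κ K → (∀ Y, S Y → K Y) → K X

/-- p-point. -/
def PPoint (κ : Cardinal.{0}) (J : Set Ordinal.{0} → Prop) : Prop :=
  ∀ f : Ordinal.{0} → Ordinal.{0}, (∀ ξ : Ordinal.{0}, J {α | α < κ.ord ∧ f α = ξ}) →
    ∃ X, Dual κ J X ∧ ∀ ξ : Ordinal.{0}, BddIn κ {α | α ∈ X ∧ f α = ξ}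

/-- q-point. -/
def QPoint (κ : Cardinal.{0}) (J : Set Ordinal.{0} → Prop) : Prop :=
  ∀ f : Ordinal.{0} → Ordinal.{0}, (∀ ξ : Ordinal.{0}, BddIn κ {α | α < κ.ord ∧ f α = ξ}) →
    ∃ X, Dual κ J X ∧ Set.InjOn f X

/-- `L = {λ + 1 : λ < κ a limit ordinal}`. -/
def LSet (κ : Cardinal.{0}) : Set Ordinal.{0} :=
  {x | ∃ lam : Ordinal.{0}, Order.IsSuccLimit lam ∧ x = lam + 1 ∧ x < κ.ord}

/-- `B(Y) = {α - 1 : α ∈ Y}` for a set `Y` of successor ordinals. -/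
def BSet (Y : Set Ordinal.{0}) : Set Ordinal.{0} := {γ | γ + 1 ∈ Y}

/-- `W = {λ < κ : cof λ = ω}`. -/
def WSet (κ : Cardinal.{0}) : Set Ordinal.{0} :=
  {lam | lam < κ.ord ∧ lam.cof = Cardinal.aleph0}

/-- Węglorz's ideal `J_κ`. -/
def Weglorz (κ : Cardinal.{0}) (X : Set Ordinal.{0}) : Prop :=
  X ⊆ Iio κ.ord ∧ ∃ (f : Ordinal.{0} → Ordinal.{0}) (θ : Cardinal.{0}), θ < κ ∧
    (∀ α ∈ X, α ≠ 0 → f α < α) ∧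
    ∀ ξ : Ordinal.{0}, Cardinal.mk {α : Ordinal.{0} // α ∈ X ∧ f α = ξ} ≤ Cardinal.lift.{1} θ

/-!
The sets `X` whose trace `{l : cof l > ω ∧ (l ∈ X ∨ l + 1 ∈ X)}` is nonstationary form a
pleasant ideal containing `I_κ` and `W`, but not `A`. Bounded sets have bounded trace and `W`
has empty trace (its points have cofinality `ω`, their successors cofinality `1`). Closure under
`<κ`-unions and diagonal unions comes from closure of clubs under diagonal intersections; at a
point `l + 1` of `∇_{α ∈ Q} X α` the index `α` is either below `l`, which the diagonal
intersection handles, or equal to `l`, which then lies in `Q`. Finally `λ + 1 ∈ A` forces `λ` to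
be a limit outside `W`, hence of uncountable cofinality, so the trace of `A` contains the
stationary set `B(A)`.
-/

section Clubs

variable {κ : Cardinal.{0}}

lemma iSup_Iio_lt_ord (hreg : κ.IsRegular) {o : Ordinal.{0}} (ho : o < κ.ord)
    {g : Ordinal.{0} → Ordinal.{0}} (hg : ∀ β < o, g β < κ.ord) :
    ⨆ β : Iio o, g β < κ.ord := by
  apply Ordinal.lift_iSup_lt_of_lt_cof
  · rwa [← Ordinal.lift_cof, hreg.cof_ord, Cardinal.mk_Iio_ordinal, Cardinal.lift_lift,
      Cardinal.lift_lt, ← Cardinal.lt_ord]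
  · exact fun β => hg β β.2

lemma le_iSup_Iio {o β : Ordinal.{0}} (g : Ordinal.{0} → Ordinal.{0}) (hβ : β < o) :
    g β ≤ ⨆ γ : Iio o, g γ :=
  le_ciSup (f := fun γ : Iio o => g γ) Ordinal.bddAbove_of_small ⟨β, hβ⟩

/-- Closure points of any `g : κ → κ` are unbounded: iterate `β ↦ max (β + 1) (sup_{γ ≤ β} g γ)`
`ω` times, which stays below `κ` since `cof κ > ω`. -/
lemma exists_closure_point (hreg : κ.IsRegular) (hunc : Cardinal.aleph0 < κ)
    {g : Ordinal.{0} → Ordinal.{0}} (hg : ∀ β < κ.ord, g β < κ.ord)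
    {α : Ordinal.{0}} (hα : α < κ.ord) :
    ∃ δ < κ.ord, α < δ ∧ Order.IsSuccLimit δ ∧ ∀ β < δ, g β < δ := by
  have hκ : Order.IsSuccLimit κ.ord := Cardinal.isSuccLimit_ord hreg.aleph0_le
  set f : Ordinal.{0} → Ordinal.{0} := fun β => max (β + 1) (⨆ γ : Iio (β + 1), g γ)
  have hf_lt : ∀ β < κ.ord, f β < κ.ord := fun β hβ =>
    max_lt (hκ.succ_lt hβ) (iSup_Iio_lt_ord hreg (hκ.succ_lt hβ)
      fun γ hγ => hg γ (lt_of_lt_of_le hγ (Order.succ_le_of_lt hβ)))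
  have hlt_f : ∀ β, β < f β := fun β => (Order.lt_succ β).trans_le (le_max_left _ _)
  have hδ : Ordinal.nfp f α < κ.ord := Ordinal.nfp_lt_ord (by rwa [hreg.cof_ord]) hf_lt hα
  have hfδ : ∀ β < Ordinal.nfp f α, β + 1 < Ordinal.nfp f α ∧ g β < Ordinal.nfp f α := by
    intro β hβ
    obtain ⟨n, hn⟩ := Ordinal.lt_nfp_iff.mp hβ
    have hx : f (f^[n] α) < Ordinal.nfp f α := by
      have := Ordinal.iterate_le_nfp f α (n + 2)
      rw [Function.iterate_succ_apply', Function.iterate_succ_apply'] at this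
      exact (hlt_f _).trans_le this
    refine ⟨(Order.succ_le_of_lt hn).trans_lt ((hlt_f _).trans hx), ?_⟩
    exact ((le_iSup_Iio g (Order.lt_succ_of_le hn.le)).trans (le_max_right _ _)).trans_lt hx
  refine ⟨Ordinal.nfp f α, hδ, (hlt_f α).trans_le (Ordinal.iterate_le_nfp f α 1), ?_,
    fun β hβ => (hfδ β hβ).2⟩
  rw [Ordinal.isSuccLimit_iff, Order.isSuccPrelimit_iff_succ_lt]
  exact ⟨((hlt_f α).trans_le (Ordinal.iterate_le_nfp f α 1)).ne_bot,
    fun β hβ => (hfδ β hβ).1⟩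

lemma IsClubIn.exists_next {C : Set Ordinal.{0}} (hC : IsClubIn κ C) :
    ∃ e : Ordinal.{0} → Ordinal.{0}, ∀ β < κ.ord, e β ∈ C ∧ β < e β := by
  choose e he using hC.2.1
  exact ⟨fun β => if h : β < κ.ord then e β h else 0, fun β hβ => by simpa [hβ] using he β hβ⟩

lemma IsClubIn.mem_of_closed_under {C : Set Ordinal.{0}} (hC : IsClubIn κ C)
    {e : Ordinal.{0} → Ordinal.{0}} (he : ∀ β < κ.ord, e β ∈ C ∧ β < e β)
    {δ : Ordinal.{0}} (hδ : δ < κ.ord) (hlim : Order.IsSuccLimit δ) (hcl : ∀ β < δ, e β < δ) :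
    δ ∈ C :=
  hC.2.2 δ hδ hlim fun β hβ =>
    ⟨e β, (he β (hβ.trans hδ)).1, (he β (hβ.trans hδ)).2, hcl β hβ⟩

lemma isClubIn_Ioi (hreg : κ.IsRegular) {θ : Ordinal.{0}} (hθ : θ < κ.ord) :
    IsClubIn κ (Iio κ.ord ∩ Ioi θ) := by
  have hκ : Order.IsSuccLimit κ.ord := Cardinal.isSuccLimit_ord hreg.aleph0_le
  refine ⟨inter_subset_left, fun α hα => ?_, fun δ hδ hlim happ => ?_⟩
  · refine ⟨max α θ + 1, ⟨hκ.succ_lt (max_lt hα hθ), ?_⟩, ?_⟩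
    · exact (le_max_right α θ).trans_lt (Order.lt_succ _)
    · exact (le_max_left α θ).trans_lt (Order.lt_succ _)
  · obtain ⟨β, ⟨-, hθβ⟩, -, hβδ⟩ := happ 0 hlim.bot_lt
    exact ⟨hδ, hθβ.trans hβδ⟩

lemma IsClubIn.inter (hreg : κ.IsRegular) (hunc : Cardinal.aleph0 < κ)
    {C D : Set Ordinal.{0}} (hC : IsClubIn κ C) (hD : IsClubIn κ D) :
    IsClubIn κ (C ∩ D) := by
  obtain ⟨eC, heC⟩ := hC.exists_next
  obtain ⟨eD, heD⟩ := hD.exists_next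
  refine ⟨inter_subset_left.trans hC.1, fun α hα => ?_, fun δ hδ hlim happ => ?_⟩
  · obtain ⟨δ, hδ, hαδ, hlim, hcl⟩ := exists_closure_point hreg hunc
      (g := fun β => max (eC β) (eD β))
      (fun β hβ => max_lt (hC.1 (heC β hβ).1) (hD.1 (heD β hβ).1)) hα
    exact ⟨δ, ⟨hC.mem_of_closed_under heC hδ hlim fun β hβ =>
      (le_max_left _ _).trans_lt (hcl β hβ), hD.mem_of_closed_under heD hδ hlim fun β hβ =>
      (le_max_right _ _).trans_lt (hcl β hβ)⟩, hαδ⟩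
  · refine ⟨hC.2.2 δ hδ hlim fun β hβ => ?_, hD.2.2 δ hδ hlim fun β hβ => ?_⟩
    · obtain ⟨γ, hγ, h⟩ := happ β hβ
      exact ⟨γ, hγ.1, h⟩
    · obtain ⟨γ, hγ, h⟩ := happ β hβ
      exact ⟨γ, hγ.2, h⟩

def diagInter (κ : Cardinal.{0}) (C : Ordinal.{0} → Set Ordinal.{0}) : Set Ordinal.{0} :=
  {δ | δ < κ.ord ∧ ∀ γ < δ, δ ∈ C γ}

lemma isClubIn_diagInter (hreg : κ.IsRegular) (hunc : Cardinal.aleph0 < κ)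
    {C : Ordinal.{0} → Set Ordinal.{0}} (hC : ∀ γ, IsClubIn κ (C γ)) :
    IsClubIn κ (diagInter κ C) := by
  choose e he using fun γ => (hC γ).exists_next
  refine ⟨fun δ hδ => hδ.1, fun α hα => ?_, fun δ hδ hlim happ => ⟨hδ, fun γ hγ => ?_⟩⟩
  · have hκ : Order.IsSuccLimit κ.ord := Cardinal.isSuccLimit_ord hreg.aleph0_le
    obtain ⟨δ, hδ, hαδ, hlim, hcl⟩ := exists_closure_point hreg hunc
      (g := fun β => ⨆ γ : Iio (β + 1), e γ β)
      (fun β hβ => iSup_Iio_lt_ord hreg (hκ.succ_lt hβ) fun γ _ => (hC γ).1 (he γ β hβ).1) hα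
    -- closure under `β ↦ e γ (max γ β)` puts `δ` into `C γ`
    refine ⟨δ, ⟨hδ, fun γ hγ => (hC γ).mem_of_closed_under (e := fun β => e γ (max γ β))
      (fun β hβ => ?_) hδ hlim fun β hβ => ?_⟩, hαδ⟩
    · have hγβ : max γ β < κ.ord := max_lt (hγ.trans hδ) hβ
      exact ⟨(he γ _ hγβ).1, (le_max_right γ β).trans_lt (he γ _ hγβ).2⟩
    · have hγβ : max γ β < δ := max_lt hγ hβ
      exact (le_iSup_Iio (fun γ' => e γ' (max γ β))
        (Order.lt_succ_of_le (le_max_left γ β))).trans_lt (hcl _ hγβ)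
  · refine (hC γ).2.2 δ hδ hlim fun ζ hζ => ?_
    obtain ⟨β, ⟨-, hβ⟩, hζβ, hβδ⟩ := happ (max γ ζ) (max_lt hγ hζ)
    exact ⟨β, hβ γ ((le_max_left γ ζ).trans_lt hζβ), (le_max_right γ ζ).trans_lt hζβ, hβδ⟩

end Clubs

def cofTrace (X : Set Ordinal.{0}) : Set Ordinal.{0} :=
  {l | Cardinal.aleph0 < l.cof ∧ (l ∈ X ∨ l + 1 ∈ X)}

lemma cofTrace_mono {X Y : Set Ordinal.{0}} (h : X ⊆ Y) : cofTrace X ⊆ cofTrace Y :=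
  fun _ ⟨hl, hX⟩ => ⟨hl, hX.imp (@h _) (@h _)⟩

lemma cofTrace_union (X Y : Set Ordinal.{0}) :
    cofTrace (X ∪ Y) = cofTrace X ∪ cofTrace Y := by
  ext l
  simp only [cofTrace, mem_union, mem_ofPred_eq]
  tauto

def TraceNS (κ : Cardinal.{0}) (X : Set Ordinal.{0}) : Prop :=
  X ⊆ Iio κ.ord ∧ ∃ C, IsClubIn κ C ∧ Disjoint (cofTrace X) C

section TraceNS

variable {κ : Cardinal.{0}}

lemma traceNS_of_bddIn (hreg : κ.IsRegular) {X : Set Ordinal.{0}} (hX : BddIn κ X) :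
    TraceNS κ X := by
  obtain ⟨θ, hθ, hXθ⟩ := hX
  refine ⟨hXθ.trans (Iio_subset_Iio hθ.le), _, isClubIn_Ioi hreg hθ, disjoint_left.mpr ?_⟩
  rintro l ⟨-, hl⟩ ⟨-, hθl⟩
  have : l < θ := hl.elim (fun h => hXθ h) fun h => (Order.lt_succ l).trans (hXθ h)
  exact hθl.not_gt this

lemma cofTrace_wSet (κ : Cardinal.{0}) : cofTrace (WSet κ) = ∅ := by
  refine eq_empty_of_forall_notMem fun l ⟨hl, hW⟩ => hW.elim (fun h => ?_) fun h => ?_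
  · exact hl.ne' h.2
  · have : (l + 1).cof = Cardinal.aleph0 := h.2
    rw [Ordinal.cof_add_one] at this
    exact Cardinal.one_lt_aleph0.ne this

lemma traceNS_wSet (hreg : κ.IsRegular) : TraceNS κ (WSet κ) :=
  ⟨fun _ h => h.1, _, isClubIn_Ioi hreg (Cardinal.ord_pos.mpr hreg.pos), by
    rw [cofTrace_wSet]; exact disjoint_bot_left⟩

lemma isIdeal_traceNS (hreg : κ.IsRegular) (hunc : Cardinal.aleph0 < κ) :
    IsIdeal κ (TraceNS κ) := by
  refine ⟨fun X hX => hX.1, fun X Y ⟨hX, C, hC, hXC⟩ hYX => ?_,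
    fun X Y ⟨hX, C, hC, hXC⟩ ⟨hY, D, hD, hYD⟩ => ?_,
    fun ξ hξ => traceNS_of_bddIn hreg ⟨ξ + 1, ?_, ?_⟩, fun θ hθ X hX => ?_⟩
  · exact ⟨hYX.trans hX, C, hC, hXC.mono_left (cofTrace_mono hYX)⟩
  · refine ⟨union_subset hX hY, C ∩ D, hC.inter hreg hunc hD, ?_⟩
    rw [cofTrace_union]
    exact (hXC.mono_right inter_subset_left).union_left (hYD.mono_right inter_subset_right)
  · exact Cardinal.isSuccLimit_ord hreg.aleph0_le |>.succ_lt hξ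
  · exact singleton_subset_iff.mpr (Order.lt_succ ξ)
  · choose hXκ C hC hXC using hX
    have hθκ : θ < κ.ord := Cardinal.lt_ord.mpr hθ
    refine ⟨iUnion₂_subset fun γ _ => hXκ γ, diagInter κ C ∩ (Iio κ.ord ∩ Ioi θ),
      (isClubIn_diagInter hreg hunc hC).inter hreg hunc (isClubIn_Ioi hreg hθκ),
      disjoint_left.mpr ?_⟩
    rintro l ⟨hl, hmem⟩ ⟨⟨-, hlC⟩, -, hθl⟩
    simp only [mem_iUnion₂, mem_Iio] at hmem
    rcases hmem with ⟨γ, hγ, hlX⟩ | ⟨γ, hγ, hlX⟩ <;>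
      exact disjoint_left.mp (hXC γ) ⟨hl, by tauto⟩ (hlC γ (hγ.trans hθl))

lemma pleasant_traceNS (hreg : κ.IsRegular) (hunc : Cardinal.aleph0 < κ) :
    Pleasant (TraceNS κ) := by
  rintro Q ⟨-, CQ, hCQ, hQ⟩ X hX
  choose hXκ C hC hXC using hX
  refine ⟨fun ξ ⟨α, _, _, hξ⟩ => hXκ α hξ, CQ ∩ diagInter κ C,
    hCQ.inter hreg hunc (isClubIn_diagInter hreg hunc hC), disjoint_left.mpr ?_⟩
  rintro l ⟨hl, ⟨α, hαl, -, hlX⟩ | ⟨α, hαl, hαQ, hlX⟩⟩ ⟨hlCQ, -, hlC⟩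
  · exact disjoint_left.mp (hXC α) ⟨hl, .inl hlX⟩ (hlC α hαl)
  · rcases (Order.lt_add_one_iff.mp hαl).lt_or_eq with hαl | rfl
    · exact disjoint_left.mp (hXC α) ⟨hl, .inr hlX⟩ (hlC α hαl)
    · exact disjoint_left.mp hQ ⟨hl, .inl hαQ⟩ hlCQ

end TraceNS

lemma bSet_subset_cofTrace {κ : Cardinal.{0}} {A : Set Ordinal.{0}}
    (hA : A ⊆ LSet κ \ {x | ∃ lam ∈ WSet κ, x = lam + 1}) : BSet A ⊆ cofTrace A := by
  intro γ hγ
  obtain ⟨⟨lam, hlim, heq, hlt⟩, hW⟩ := hA hγ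
  obtain rfl : γ = lam := Order.succ_injective heq
  have hcof : Cardinal.aleph0 ≤ γ.cof :=
    Ordinal.aleph0_le_cof_iff.mpr (Ordinal.one_lt_cof_iff.mpr hlim)
  have hcof_ne : γ.cof ≠ Cardinal.aleph0 := fun h => hW ⟨γ, ⟨(Order.lt_succ γ).trans hlt, h⟩, rfl⟩
  exact ⟨hcof.lt_of_ne' hcof_ne, .inr hγ⟩

/-- If `A ⊆ L \ {λ+1 : λ ∈ W}` and `B(A)` is stationary, then `A` is not in the
pleasant closure of the ideal generated by `I_κ ∪ {W}`. -/
theorem stmt17 (κ : Cardinal.{0}) (hreg : κ.IsRegular) (hunc : Cardinal.aleph0 < κ)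
    (A : Set Ordinal.{0})
    (hA : A ⊆ LSet κ \ {x | ∃ lam ∈ WSet κ, x = lam + 1})
    (hB : StatIn κ (BSet A)) :
    ¬ PClosure κ (fun X => BddIn κ X ∨ X = WSet κ) A := by
  intro hA_mem
  obtain ⟨-, C, hC, hAC⟩ := hA_mem (TraceNS κ) (isIdeal_traceNS hreg hunc)
    (pleasant_traceNS hreg hunc) fun Y hY => hY.elim (traceNS_of_bddIn hreg) (· ▸ traceNS_wSet hreg)
  obtain ⟨γ, hγA, hγC⟩ := hB.2 C hC
  exact disjoint_left.mp hAC (bSet_subset_cofTrace hA hγA) hγC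

end PaperIdeals
end

section
/- An ideal I on κ is quasinormal if and only if I is selective (both a p-point and a q-point). -/
/-!
If `I` is quasinormal and `f` is `I`-small, apply quasinormality to the fibres `f⁻¹{f α}`:
off the diagonal union, two points of one fibre cannot both survive, so `f` is injective on a
set in `I*`. This gives the p-point property at once, and the q-point property because bounded
sets lie in `I`.

Conversely, given `X_α ∈ I`, let `g ξ` be the least `α < ξ` with `ξ ∈ X_α`. The fibres of `g`
lie in `I`, so the p-point property gives `Y ∈ I*` on which they are bounded, and by regularity
`{ξ ∈ Y | g ξ ≤ α} ⊆ φ(α)` for some `φ : κ → κ`. Cut `κ` into intervals at the closure points of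
`φ` (unbounded, as `κ` is uncountable) and let `h ξ` be the left end of the interval of `ξ`; its
fibres are bounded, so the q-point property gives `Z ∈ I*` on which `h` is injective. If `α < ξ`
with `ξ ∈ X_α ∩ Y`, then `α < ξ < φ(α)` lie in one interval, so `α` and `ξ` are not both in `Z`:
the diagonal union indexed by `Y ∩ Z` misses `Y ∩ Z`.
-/

open Set

namespace PaperIdeals

section

variable {κ : Cardinal.{0}} {J : Set Ordinal.{0} → Prop}

namespace IsIdeal

lemma subset_Iio_ord (hJ : IsIdeal κ J) {X : Set Ordinal.{0}} (hX : J X) : X ⊆ Iio κ.ord :=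
  hJ.1 X hX

lemma mono (hJ : IsIdeal κ J) {X Y : Set Ordinal.{0}} (hX : J X) (hYX : Y ⊆ X) : J Y :=
  hJ.2.1 X Y hX hYX

lemma union (hJ : IsIdeal κ J) {X Y : Set Ordinal.{0}} (hX : J X) (hY : J Y) : J (X ∪ Y) :=
  hJ.2.2.1 X Y hX hY

lemma inter_singleton (hJ : IsIdeal κ J) (hκ : Cardinal.aleph0 ≤ κ) {X : Set Ordinal.{0}}
    (hX : X ⊆ Iio κ.ord) (α : Ordinal.{0}) : J (X ∩ {α}) := by
  by_cases hα : α < κ.ord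
  · exact hJ.mono (hJ.2.2.2.1 α hα) inter_subset_right
  · refine hJ.mono (hJ.2.2.2.1 0 (Cardinal.ord_pos.2 (Cardinal.aleph0_pos.trans_le hκ))) ?_
    rintro ξ ⟨hξX, rfl⟩
    exact absurd (hX hξX) hα

lemma of_bddIn (hJ : IsIdeal κ J) (hκ : Cardinal.aleph0 ≤ κ) {X : Set Ordinal.{0}}
    (hX : BddIn κ X) : J X := by
  obtain ⟨θ, hθ, hXθ⟩ := hX
  refine hJ.mono (hJ.2.2.2.2 θ (Cardinal.lt_ord.1 hθ) (fun α => X ∩ {α})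
    (hJ.inter_singleton hκ (hXθ.trans (Iio_subset_Iio hθ.le)))) fun ξ hξ => ?_
  exact mem_biUnion (hXθ hξ) ⟨hξ, rfl⟩

lemma dual_inter (hJ : IsIdeal κ J) {A B : Set Ordinal.{0}} (hA : Dual κ J A)
    (hB : Dual κ J B) : Dual κ J (A ∩ B) := by
  refine ⟨inter_subset_left.trans hA.1, hJ.mono (hJ.union hA.2 hB.2) ?_⟩
  rw [sdiff_inter]

lemma exists_dual_injOn_of_quasinormal (hJ : IsIdeal κ J) (hqn : Quasinormal κ J)
    (f : Ordinal.{0} → Ordinal.{0}) (hf : ∀ ξ, J {α | α < κ.ord ∧ f α = ξ}) :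
    ∃ X, Dual κ J X ∧ InjOn f X := by
  obtain ⟨Q, hQ, hD⟩ := hqn (fun α => {β | β < κ.ord ∧ f β = f α}) (fun α => hf (f α))
  set D := diagU Q (fun α => {β | β < κ.ord ∧ f β = f α})
  refine ⟨Q \ D, ⟨sdiff_subset.trans hQ.1, hJ.mono (hJ.union hQ.2 hD) ?_⟩, ?_⟩
  · rw [sdiff_sdiff_right]
    exact union_subset_union_right _ inter_subset_right
  · intro a ha b hb hfab
    by_contra hne
    rcases lt_or_gt_of_ne hne with h | h
    · exact hb.2 ⟨a, h, ha.1, hQ.1 hb.1, hfab.symm⟩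
    · exact ha.2 ⟨b, h, hb.1, hQ.1 ha.1, hfab⟩

end IsIdeal

lemma bddIn_of_subsingleton (hκ : Cardinal.aleph0 ≤ κ) {S : Set Ordinal.{0}}
    (hS : S.Subsingleton) (hSκ : S ⊆ Iio κ.ord) : BddIn κ S := by
  rcases hS.eq_empty_or_singleton with rfl | ⟨a, rfl⟩
  · exact ⟨0, Cardinal.ord_pos.2 (Cardinal.aleph0_pos.trans_le hκ), empty_subset _⟩
  · exact ⟨Order.succ a, (Cardinal.isSuccLimit_ord hκ).succ_lt (hSκ rfl),
      singleton_subset_iff.2 (Order.lt_succ a)⟩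

lemma pPoint_of_quasinormal (hκ : Cardinal.aleph0 ≤ κ) (hJ : IsIdeal κ J)
    (hqn : Quasinormal κ J) : PPoint κ J := by
  intro f hf
  obtain ⟨X, hX, hinj⟩ := hJ.exists_dual_injOn_of_quasinormal hqn f hf
  exact ⟨X, hX, fun ξ => bddIn_of_subsingleton hκ
    (fun a ha b hb => hinj ha.1 hb.1 (ha.2.trans hb.2.symm)) fun a ha => hX.1 ha.1⟩

lemma qPoint_of_quasinormal (hκ : Cardinal.aleph0 ≤ κ) (hJ : IsIdeal κ J)
    (hqn : Quasinormal κ J) : QPoint κ J :=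
  fun f hf => hJ.exists_dual_injOn_of_quasinormal hqn f fun ξ => hJ.of_bddIn hκ (hf ξ)

lemma BddIn.mono {S T : Set Ordinal.{0}} (hT : BddIn κ T) (hST : S ⊆ T) : BddIn κ S :=
  let ⟨θ, hθ, hTθ⟩ := hT
  ⟨θ, hθ, hST.trans hTθ⟩

lemma exists_bound_fun_of_forall_bddIn {o : Ordinal.{0}} {S : Ordinal.{0} → Set Ordinal.{0}}
    (hS : ∀ ζ < o, BddIn κ (S ζ)) :
    ∃ b : Ordinal.{0} → Ordinal.{0}, ∀ ζ < o, b ζ < κ.ord ∧ S ζ ⊆ Iio (b ζ) := by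
  have hS' : ∀ ζ, ∃ θ, ζ < o → θ < κ.ord ∧ S ζ ⊆ Iio θ := fun ζ => by
    by_cases hζ : ζ < o
    · obtain ⟨θ, hθ⟩ := hS ζ hζ
      exact ⟨θ, fun _ => hθ⟩
    · exact ⟨0, fun h => absurd h hζ⟩
  choose b hb using hS'
  exact ⟨b, hb⟩

lemma bddIn_biUnion (hreg : κ.IsRegular) {θ : Ordinal.{0}} (hθ : θ < κ.ord)
    {S : Ordinal.{0} → Set Ordinal.{0}} (hS : ∀ η < θ, BddIn κ (S η)) :
    BddIn κ (⋃ η < θ, S η) := by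
  obtain ⟨b, hb⟩ := exists_bound_fun_of_forall_bddIn hS
  refine ⟨⨆ η : Iio θ, b η, Ordinal.lift_iSup_lt_of_lt_cof ?_ fun η => (hb η η.2).1, ?_⟩
  · rw [Cardinal.mk_Iio_ordinal, Cardinal.lift_id', ← Ordinal.lift_cof, hreg.cof_ord,
      Cardinal.lift_lt]
    exact Cardinal.lt_ord.1 hθ
  · refine iUnion₂_subset fun η hη ξ hξ => ?_
    exact ((hb η hη).2 hξ).trans_le (Ordinal.le_iSup (fun η : Iio θ => b η) ⟨η, hη⟩)

lemma exists_closed_under_gt (hreg : κ.IsRegular) (hunc : Cardinal.aleph0 < κ)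
    {φ : Ordinal.{0} → Ordinal.{0}} (hφ : ∀ ζ < κ.ord, φ ζ < κ.ord) {β : Ordinal.{0}}
    (hβ : β < κ.ord) : ∃ δ, β < δ ∧ δ < κ.ord ∧ ∀ ζ < δ, φ ζ < δ := by
  have hκ := hreg.aleph0_le
  obtain ⟨Ψ, hΨ⟩ := exists_bound_fun_of_forall_bddIn (o := κ.ord)
    (S := fun γ => ⋃ ζ < γ, Iic (φ ζ)) fun γ hγ => bddIn_biUnion hreg hγ fun ζ hζ =>
      ⟨Order.succ (φ ζ), (Cardinal.isSuccLimit_ord hκ).succ_lt (hφ ζ (hζ.trans hγ)),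
        fun _ h => (mem_Iic.1 h).trans_lt (Order.lt_succ _)⟩
  -- the `ω`-th iterate of `Ψ` stays below `κ` because `cf κ > ω`
  have hiter : ∀ n, Ψ^[n] (Order.succ β) < κ.ord := fun n => by
    induction n with
    | zero => exact (Cardinal.isSuccLimit_ord hκ).succ_lt hβ
    | succ n ih => rw [Function.iterate_succ_apply']; exact (hΨ _ ih).1
  refine ⟨Ordinal.nfp Ψ (Order.succ β),
    (Order.lt_succ β).trans_le (Ordinal.iterate_le_nfp Ψ _ 0),
    Cardinal.nfp_lt_ord_of_isRegular hreg hunc.ne' (fun γ hγ => (hΨ γ hγ).1)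
      ((Cardinal.isSuccLimit_ord hκ).succ_lt hβ), fun ζ hζ => ?_⟩
  obtain ⟨n, hn⟩ := Ordinal.lt_nfp_iff.1 hζ
  calc φ ζ < Ψ (Ψ^[n] (Order.succ β)) := (hΨ _ (hiter n)).2 (mem_biUnion hn (mem_Iic.2 le_rfl))
    _ = Ψ^[n + 1] (Order.succ β) := (Function.iterate_succ_apply' _ _ _).symm
    _ ≤ _ := Ordinal.iterate_le_nfp Ψ _ _

lemma exists_bddIn_fibers_const_on_Ico (hreg : κ.IsRegular) (hunc : Cardinal.aleph0 < κ)
    {φ : Ordinal.{0} → Ordinal.{0}} (hφ : ∀ ζ < κ.ord, φ ζ < κ.ord) :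
    ∃ h : Ordinal.{0} → Ordinal.{0}, (∀ v, BddIn κ {β | β < κ.ord ∧ h β = v}) ∧
      ∀ α ξ, α < ξ → ξ < φ α → h ξ = h α := by
  -- `h ξ` is the last closure point of `φ` at or below `ξ`
  set C := {δ | δ < κ.ord ∧ ∀ ζ < δ, φ ζ < δ}
  refine ⟨fun ξ => sSup {δ ∈ C | δ ≤ ξ}, fun v => ?_, fun α ξ hαξ hξ => ?_⟩
  · by_cases hv : v < κ.ord
    · obtain ⟨δ, hvδ, hδκ, hδC⟩ := exists_closed_under_gt hreg hunc hφ hv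
      refine ⟨δ, hδκ, fun β ⟨_, hβv⟩ => mem_Iio.2 <| lt_of_not_ge fun hδβ => hvδ.not_ge ?_⟩
      exact hβv ▸ le_csSup ⟨β, fun _ h => h.2⟩ ⟨⟨hδκ, hδC⟩, hδβ⟩
    · refine ⟨0, Cardinal.ord_pos.2 hreg.pos, fun β ⟨hβ, hβv⟩ => absurd ?_ hv⟩
      exact hβv ▸ (csSup_le' fun _ h => h.2).trans_lt hβ
  · refine congrArg sSup <| Set.ext fun δ => ?_
    refine ⟨fun ⟨hδC, hδξ⟩ => ⟨hδC, le_of_not_gt fun hαδ => ?_⟩, fun ⟨hδC, hδα⟩ =>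
      ⟨hδC, hδα.trans hαξ.le⟩⟩
    exact (hξ.trans (hδC.2 α hαδ)).not_ge hδξ

noncomputable def leastIndex (X : Ordinal.{0} → Set Ordinal.{0}) (ξ : Ordinal.{0}) :
    Ordinal.{0} :=
  sInf ({α | α < ξ ∧ ξ ∈ X α} ∪ {ξ})

lemma leastIndex_le {X : Ordinal.{0} → Set Ordinal.{0}} {α ξ : Ordinal.{0}} (hαξ : α < ξ)
    (hξ : ξ ∈ X α) : leastIndex X ξ ≤ α :=
  csInf_le' (Or.inl ⟨hαξ, hξ⟩)

lemma mem_or_eq_of_leastIndex_eq {X : Ordinal.{0} → Set Ordinal.{0}} {ξ v : Ordinal.{0}}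
    (hv : leastIndex X ξ = v) : ξ ∈ X v ∨ ξ = v := by
  rcases csInf_mem (s := {α | α < ξ ∧ ξ ∈ X α} ∪ {ξ}) ⟨ξ, Or.inr rfl⟩ with h | h
  · exact Or.inl (hv ▸ h.2)
  · exact Or.inr (h.symm.trans hv)

lemma IsIdeal.leastIndex_fiber (hJ : IsIdeal κ J) (hκ : Cardinal.aleph0 ≤ κ)
    {X : Ordinal.{0} → Set Ordinal.{0}} (hX : ∀ α, J (X α)) (v : Ordinal.{0}) :
    J {ξ | ξ < κ.ord ∧ leastIndex X ξ = v} := by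
  refine hJ.mono (hJ.union (hX v) (hJ.inter_singleton hκ subset_rfl v)) fun ξ ⟨hξ, hξv⟩ => ?_
  exact (mem_or_eq_of_leastIndex_eq hξv).imp id fun h => ⟨hξ, h⟩

lemma bddIn_sublevel (hreg : κ.IsRegular) {f : Ordinal.{0} → Ordinal.{0}} {Y : Set Ordinal.{0}}
    (hf : ∀ η, BddIn κ {α | α ∈ Y ∧ f α = η}) {ζ : Ordinal.{0}} (hζ : ζ < κ.ord) :
    BddIn κ {α | α ∈ Y ∧ f α ≤ ζ} :=
  (bddIn_biUnion hreg ((Cardinal.isSuccLimit_ord hreg.aleph0_le).succ_lt hζ)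
    fun η _ => hf η).mono fun _ ⟨hαY, hαζ⟩ => mem_biUnion (Order.lt_succ_of_le hαζ) ⟨hαY, rfl⟩

lemma quasinormal_of_pPoint_of_qPoint (hreg : κ.IsRegular) (hunc : Cardinal.aleph0 < κ)
    (hJ : IsIdeal κ J) (hp : PPoint κ J) (hq : QPoint κ J) : Quasinormal κ J := by
  intro X hX
  obtain ⟨Y, hY, hYfib⟩ := hp (leastIndex X) (hJ.leastIndex_fiber hreg.aleph0_le hX)
  obtain ⟨φ, hφ⟩ := exists_bound_fun_of_forall_bddIn fun ζ hζ => bddIn_sublevel hreg hYfib hζ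
  obtain ⟨h, hfib, hconst⟩ :=
    exists_bddIn_fibers_const_on_Ico hreg hunc fun ζ hζ => (hφ ζ hζ).1
  obtain ⟨Z, hZ, hinj⟩ := hq h hfib
  refine ⟨Y ∩ Z, hJ.dual_inter hY hZ, hJ.mono (hJ.dual_inter hY hZ).2 ?_⟩
  rintro ξ ⟨α, hαξ, ⟨-, hαZ⟩, hξX⟩
  have hξκ := hJ.subset_Iio_ord (hX α) hξX
  refine ⟨hξκ, fun ⟨hξY, hξZ⟩ => hαξ.ne' (hinj hξZ hαZ (hconst α ξ hαξ ?_))⟩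
  exact (hφ α (hαξ.trans hξκ)).2 ⟨hξY, leastIndex_le hαξ hξX⟩

end

theorem stmt19_general (κ : Cardinal.{0}) (hreg : κ.IsRegular) (hunc : Cardinal.aleph0 < κ)
    (J : Set Ordinal.{0} → Prop) (hJ : IsIdeal κ J) :
    Quasinormal κ J ↔ (PPoint κ J ∧ QPoint κ J) :=
  ⟨fun hqn => ⟨pPoint_of_quasinormal hreg.aleph0_le hJ hqn,
      qPoint_of_quasinormal hreg.aleph0_le hJ hqn⟩,
    fun ⟨hp, hq⟩ => quasinormal_of_pPoint_of_qPoint hreg hunc hJ hp hq⟩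

/-- `I` is quasinormal iff `I` is selective (both a p-point and a q-point). -/
theorem stmt19 (κ : Cardinal.{0}) (hreg : κ.IsRegular) (hunc : Cardinal.aleph0 < κ)
    (J : Set Ordinal.{0} → Prop) (hJ : IsIdeal κ J) (hprop : Proper κ J) :
    Quasinormal κ J ↔ (PPoint κ J ∧ QPoint κ J) :=
  stmt19_general κ hreg hunc J hJ

end PaperIdeals
end
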